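/- For ψ analytic nonvanishing on an open set Ω with ℏ²ψ''=Uψ, the third-order operator Û defined by Û·f = (1/2)·(2ψ'/ψ + ∂)·∂·(2ψ'/ψ − ∂)·f equals −(1/2)f''' + (2/ℏ²)U·f' + (1/ℏ²)U'·f for every analytic f on Ω; in particular Û depends only on U and not on the choice of solution ψ. -/

import Mathlib

/-!
Write `L = ψ'/ψ`. The Schrödinger equation `ℏ²ψ'' = Uψ` turns into the Riccati equation
`L' = U/ℏ² - L²`, and with `g = 2Lf - f'` one finds
`g' = 2(U/ℏ² - L²)f + 2Lf' - f''`. Differentiating once more, every term containing `L`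
cancels in `½(2Lg' + g'')`, which is why the operator does not depend on `ψ`.
-/

section GelfandDikii

variable {𝕜 : Type*} [NontriviallyNormedField 𝕜]

theorem hasDerivAt_deriv_div_self {ψ : 𝕜 → 𝕜} {y : 𝕜} (hψ : DifferentiableAt 𝕜 ψ y)
    (hψ' : DifferentiableAt 𝕜 (deriv ψ) y) (hψ0 : ψ y ≠ 0) :
    HasDerivAt (fun t => deriv ψ t / ψ t)
      (deriv (deriv ψ) y / ψ y - (deriv ψ y / ψ y) ^ 2) y := by
  refine (hψ'.hasDerivAt.div hψ.hasDerivAt hψ0).congr_deriv ?_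
  field_simp

theorem hasDerivAt_riccati_of_schrodinger {ℏ : 𝕜} (hℏ : ℏ ≠ 0) {U ψ : 𝕜 → 𝕜} {y : 𝕜}
    (hψ : DifferentiableAt 𝕜 ψ y) (hψ' : DifferentiableAt 𝕜 (deriv ψ) y) (hψ0 : ψ y ≠ 0)
    (heq : ℏ ^ 2 * deriv (deriv ψ) y = U y * ψ y) :
    HasDerivAt (fun t => deriv ψ t / ψ t) (U y / ℏ ^ 2 - (deriv ψ y / ψ y) ^ 2) y := by
  refine (hasDerivAt_deriv_div_self hψ hψ' hψ0).congr_deriv ?_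
  have hψ'' : deriv (deriv ψ) y = U y * ψ y / ℏ ^ 2 := by
    rw [eq_div_iff (pow_ne_zero 2 hℏ), ← heq, mul_comm]
  rw [hψ'']
  field_simp

variable {L V f : 𝕜 → 𝕜}

theorem deriv_two_mul_mul_sub_deriv {y : 𝕜} (hL : HasDerivAt L (V y - L y ^ 2) y)
    (hf : DifferentiableAt 𝕜 f y) (hf' : DifferentiableAt 𝕜 (deriv f) y) :
    deriv (fun t => 2 * L t * f t - deriv f t) y =
      2 * (V y - L y ^ 2) * f y + 2 * L y * deriv f y - deriv (deriv f) y :=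
  (((hL.const_mul 2).mul hf.hasDerivAt).sub hf'.hasDerivAt).deriv.trans (by ring)

variable [CompleteSpace 𝕜] [CharZero 𝕜] {s : Set 𝕜}

theorem gelfandDikii_of_riccati (hs : IsOpen s) (hL : ∀ y ∈ s, HasDerivAt L (V y - L y ^ 2) y)
    (hf : AnalyticOnNhd 𝕜 f s) {x : 𝕜} (hx : x ∈ s) (hV : DifferentiableAt 𝕜 V x) :
    (1 / 2) * (2 * L x * deriv (fun t => 2 * L t * f t - deriv f t) x
        + deriv (deriv (fun t => 2 * L t * f t - deriv f t)) x)
      = -(1 / 2) * deriv (deriv (deriv f)) x + 2 * V x * deriv f x + deriv V x * f x := by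
  have hdf : ∀ y ∈ s, DifferentiableAt 𝕜 f y := fun y hy => (hf y hy).differentiableAt
  have hdf' : ∀ y ∈ s, DifferentiableAt 𝕜 (deriv f) y :=
    fun y hy => (hf.deriv y hy).differentiableAt
  have hdf'' : DifferentiableAt 𝕜 (deriv (deriv f)) x := (hf.deriv.deriv x hx).differentiableAt
  have hg' : deriv (fun t => 2 * L t * f t - deriv f t) =ᶠ[nhds x]
      fun t => 2 * (V t - L t ^ 2) * f t + 2 * L t * deriv f t - deriv (deriv f) t :=
    Filter.eventuallyEq_of_mem (hs.mem_nhds hx) fun y hy =>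
      deriv_two_mul_mul_sub_deriv (hL y hy) (hdf y hy) (hdf' y hy)
  have hg'' : HasDerivAt
      (fun t => 2 * (V t - L t ^ 2) * f t + 2 * L t * deriv f t - deriv (deriv f) t) _ x :=
    ((((hV.hasDerivAt.sub ((hL x hx).pow 2)).const_mul 2).mul
      (hdf x hx).hasDerivAt).add (((hL x hx).const_mul 2).mul (hdf' x hx).hasDerivAt)).sub
      hdf''.hasDerivAt
  rw [hg'.deriv_eq, hg''.deriv, hg'.eq_of_nhds]
  simp only [Pi.sub_apply, Pi.pow_apply, Nat.cast_ofNat]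
  field_simp
  ring

end GelfandDikii

/-- Gelfand–Dikii operator: for `ψ` analytic nonvanishing with `ℏ²ψ'' = Uψ` on open `Ω`,
and any analytic `f` on `Ω`,
`½(2ψ'/ψ + ∂)∂(2ψ'/ψ − ∂)f = −½f''' + (2/ℏ²)Uf' + (1/ℏ²)U'f`,
so the operator depends only on `U`. -/
theorem stmt8 (ℏ : ℂ) (hℏ : ℏ ≠ 0) (Ω : Set ℂ) (hΩ : IsOpen Ω)
    (U ψ f : ℂ → ℂ)
    (hU : AnalyticOnNhd ℂ U Ω)
    (hψ : AnalyticOnNhd ℂ ψ Ω)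
    (hψ0 : ∀ x ∈ Ω, ψ x ≠ 0)
    (heq : ∀ x ∈ Ω, ℏ ^ 2 * deriv (deriv ψ) x = U x * ψ x)
    (hf : AnalyticOnNhd ℂ f Ω) :
    ∀ x ∈ Ω,
      (1 / 2) *
        (2 * (deriv ψ x / ψ x) *
            deriv (fun t => 2 * (deriv ψ t / ψ t) * f t - deriv f t) x
          + deriv (deriv (fun t => 2 * (deriv ψ t / ψ t) * f t - deriv f t)) x)
      = -(1 / 2) * deriv (deriv (deriv f)) x
          + (2 / ℏ ^ 2) * U x * deriv f x
          + (1 / ℏ ^ 2) * deriv U x * f x := by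
  intro x hx
  have hriccati : ∀ y ∈ Ω, HasDerivAt (fun t => deriv ψ t / ψ t)
      (U y / ℏ ^ 2 - (deriv ψ y / ψ y) ^ 2) y := fun y hy =>
    hasDerivAt_riccati_of_schrodinger hℏ (hψ y hy).differentiableAt
      (hψ.deriv y hy).differentiableAt (hψ0 y hy) (heq y hy)
  have hV : DifferentiableAt ℂ (fun t => U t / ℏ ^ 2) x := (hU x hx).differentiableAt.div_const _
  rw [gelfandDikii_of_riccati hΩ hriccati hf hx hV, deriv_div_const]
  ring
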